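/- arXiv:1805.00546 — 7 statements merged into one kernel-verified Lean document; each statement's English description precedes it below -/
import Mathlib

section
/- For every integer z there exists exactly one finitely supported function d : ℕ → {0,1} such that z = ∑_i d(i)·(−2)^i (the sum taken over the support of d). That is, every integer has a unique finite negabinary representation. -/
private lemma neg_key : ∀ N (f g : ℕ → ℤ), (∀ i, f i = 0 ∨ f i = 1) →
    (∀ i, g i = 0 ∨ g i = 1) →
    (∑ i ∈ Finset.range N, f i * (-2 : ℤ) ^ i) = (∑ i ∈ Finset.range N, g i * (-2 : ℤ) ^ i) →
    ∀ i < N, f i = g i := by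
  intro N
  induction N with
  | zero => intro f g _ _ _ i hi; omega
  | succ N ih =>
    intro f g hf hg h i hi
    rw [Finset.sum_range_succ', Finset.sum_range_succ'] at h
    have hA : (∑ i ∈ Finset.range N, f (i+1) * (-2 : ℤ) ^ (i+1))
        = (-2) * ∑ i ∈ Finset.range N, f (i+1) * (-2 : ℤ) ^ i := by
      rw [Finset.mul_sum]; exact Finset.sum_congr rfl (fun j _ => by ring)
    have hB : (∑ i ∈ Finset.range N, g (i+1) * (-2 : ℤ) ^ (i+1))
        = (-2) * ∑ i ∈ Finset.range N, g (i+1) * (-2 : ℤ) ^ i := by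
      rw [Finset.mul_sum]; exact Finset.sum_congr rfl (fun j _ => by ring)
    rw [hA, hB] at h
    simp only [pow_zero, mul_one] at h
    have h0 : f 0 = g 0 := by
      have := hf 0; have := hg 0; omega
    have hS : (∑ i ∈ Finset.range N, f (i+1) * (-2 : ℤ) ^ i)
        = (∑ i ∈ Finset.range N, g (i+1) * (-2 : ℤ) ^ i) := by
      have h2 : (-2 : ℤ) * (∑ i ∈ Finset.range N, f (i+1) * (-2 : ℤ) ^ i)
          = (-2) * (∑ i ∈ Finset.range N, g (i+1) * (-2 : ℤ) ^ i) := by omega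
      exact mul_left_cancel₀ (by norm_num) h2
    match i with
    | 0 => exact h0
    | (j+1) =>
      exact ih (fun k => f (k+1)) (fun k => g (k+1)) (fun k => hf (k+1)) (fun k => hg (k+1))
        hS j (by omega)

private lemma neg_exists : ∀ n : ℕ, ∀ z : ℤ,
    2 * z.natAbs + (if z < 0 then 1 else 0) ≤ n →
    ∃ f : ℕ → ℤ, (∀ i, f i = 0 ∨ f i = 1) ∧
      ∃ N, z = ∑ i ∈ Finset.range N, f i * (-2 : ℤ) ^ i ∧ ∀ i, N ≤ i → f i = 0 := by
  intro n
  induction n with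
  | zero =>
    intro z hz
    have : z = 0 := by split_ifs at hz <;> omega
    subst this
    exact ⟨fun _ => 0, fun i => Or.inl rfl, 0, by simp, fun i _ => rfl⟩
  | succ n ih =>
    intro z hz
    by_cases h0 : z = 0
    · subst h0
      exact ⟨fun _ => 0, fun i => Or.inl rfl, 0, by simp, fun i _ => rfl⟩
    · set b : ℤ := z % 2 with hb
      set z' : ℤ := -(z / 2) with hz'
      have hzeq : z = b + (-2) * z' := by
        have := Int.mul_ediv_add_emod z 2
        omega
      have hmeas : 2 * z'.natAbs + (if z' < 0 then 1 else 0) ≤ n := by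
        split_ifs at hz ⊢ <;> omega
      obtain ⟨f', hf', N', hN', hz0⟩ := ih z' hmeas
      refine ⟨fun i => match i with | 0 => b | (j+1) => f' j, ?_, N' + 1, ?_, ?_⟩
      · intro i
        match i with
        | 0 => simp only; omega
        | (j+1) => exact hf' j
      · rw [Finset.sum_range_succ']
        simp only [pow_zero, mul_one]
        have : (∑ i ∈ Finset.range N', f' i * (-2 : ℤ) ^ (i+1))
            = (-2) * ∑ i ∈ Finset.range N', f' i * (-2 : ℤ) ^ i := by
          rw [Finset.mul_sum]; exact Finset.sum_congr rfl (fun j _ => by ring)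
        rw [this, ← hN']
        omega
      · intro i hi
        match i with
        | (j+1) => exact hz0 j (by omega)

/-- Every integer has a unique finite negabinary representation: there is exactly one
finitely supported function `d : ℕ → {0,1}` with `z = ∑_i d(i)·(−2)^i`. -/
theorem negabinary_exists_unique (z : ℤ) :
    ∃! d : ℕ →₀ ℤ, (∀ i, d i = 0 ∨ d i = 1) ∧
      z = ∑ i ∈ d.support, d i * (-2 : ℤ) ^ i := by
  obtain ⟨f, hf, N, hsum, hzero⟩ :=
    neg_exists (2 * z.natAbs + (if z < 0 then 1 else 0)) z le_rfl
  have hfin : ∀ a : ℕ, f a ≠ 0 → a ∈ Finset.range N := by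
    intro a ha
    by_contra hc
    exact ha (hzero a (by simpa [Finset.mem_range, not_lt] using hc))
  set d : ℕ →₀ ℤ := Finsupp.onFinset (Finset.range N) f hfin with hd
  have hdco : ∀ i, d i = f i := fun i => rfl
  have hdsum : z = ∑ i ∈ d.support, d i * (-2 : ℤ) ^ i := by
    rw [hsum]
    refine (Finset.sum_subset (Finsupp.support_onFinset_subset) ?_).symm
    intro x _ hx
    have : d x = 0 := Finsupp.notMem_support_iff.mp hx
    rw [hdco] at this
    simp [this]
  -- a general lemma: any two valid representations agree
  have huniq : ∀ e₁ e₂ : ℕ →₀ ℤ, (∀ i, e₁ i = 0 ∨ e₁ i = 1) → (∀ i, e₂ i = 0 ∨ e₂ i = 1) →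
      (∑ i ∈ e₁.support, e₁ i * (-2 : ℤ) ^ i) = (∑ i ∈ e₂.support, e₂ i * (-2 : ℤ) ^ i) →
      e₁ = e₂ := by
    intro e₁ e₂ h₁ h₂ hsums
    obtain ⟨M, hM⟩ := Finset.exists_nat_subset_range (e₁.support ∪ e₂.support)
    have hs₁ : (∑ i ∈ e₁.support, e₁ i * (-2 : ℤ) ^ i)
        = ∑ i ∈ Finset.range M, e₁ i * (-2 : ℤ) ^ i := by
      refine Finset.sum_subset (fun x hx => hM (Finset.mem_union_left _ hx)) ?_
      intro x _ hx
      simp [Finsupp.notMem_support_iff.mp hx]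
    have hs₂ : (∑ i ∈ e₂.support, e₂ i * (-2 : ℤ) ^ i)
        = ∑ i ∈ Finset.range M, e₂ i * (-2 : ℤ) ^ i := by
      refine Finset.sum_subset (fun x hx => hM (Finset.mem_union_right _ hx)) ?_
      intro x _ hx
      simp [Finsupp.notMem_support_iff.mp hx]
    rw [hs₁, hs₂] at hsums
    ext i
    by_cases hi : i < M
    · exact neg_key M e₁ e₂ h₁ h₂ hsums i hi
    · have h1 : e₁ i = 0 := by
        by_contra hc
        have := hM (Finset.mem_union_left _ (Finsupp.mem_support_iff.mpr hc))
        simp [Finset.mem_range] at this; omega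
      have h2 : e₂ i = 0 := by
        by_contra hc
        have := hM (Finset.mem_union_right _ (Finsupp.mem_support_iff.mpr hc))
        simp [Finset.mem_range] at this; omega
      rw [h1, h2]
  refine ⟨d, ⟨fun i => by rw [hdco]; exact hf i, hdsum⟩, ?_⟩
  rintro e ⟨he, hes⟩
  exact huniq e d he (fun i => by rw [hdco]; exact hf i) (by rw [← hes, ← hdsum])
end

section
/- Let q ∈ ℕ, n ∈ ℕ, and x ∈ ℝⁿ with x ≠ 0. Let e_max = ⌊log₂‖x‖_∞⌋ and ℓ = e_max − q + 1. Define z ∈ ℤⁿ componentwise by z_i = sgn(x_i)·⌊2^{−ℓ}·|x_i|⌋ (truncation toward zero of the scaled value). Then max_i |z_i − 2^{−ℓ}·x_i| ≤ 2^{−ℓ}·ε_q·‖x‖_∞, where ε_q = 2^{1−q}. -/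
/-- Step 2 of ZFP (block-floating-point conversion): for `x ∈ ℝⁿ`, `x ≠ 0`, with
`e_max = ⌊log₂‖x‖_∞⌋` and `ℓ = e_max − q + 1`, the signed-integer truncation
`z_i = sgn(x_i)·⌊2^{−ℓ}·|x_i|⌋` satisfies
`max_i |z_i − 2^{−ℓ}·x_i| ≤ 2^{−ℓ}·ε_q·‖x‖_∞`, where `ε_q = 2^{1−q}`. -/
theorem zfp_step2_error (q n : ℕ) (x : Fin n → ℝ) (hx : x ≠ 0)
    (emax ℓ : ℤ) (hemax : emax = ⌊Real.logb 2 ‖x‖⌋) (hℓ : ℓ = emax - (q : ℤ) + 1)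
    (z : Fin n → ℤ)
    (hz : ∀ i, z i = (if 0 ≤ x i then 1 else -1) * ⌊(2 : ℝ) ^ (-ℓ) * |x i|⌋) :
    ∀ i, |(z i : ℝ) - 2 ^ (-ℓ) * x i| ≤ 2 ^ (-ℓ) * 2 ^ (1 - (q : ℤ)) * ‖x‖ := by
  intro i
  have hxnorm : 0 < ‖x‖ := norm_pos_iff.mpr hx
  have key : ∀ y : ℝ, |(⌊y⌋ : ℝ) - y| ≤ 1 := fun y => by
    rw [abs_sub_comm, abs_of_nonneg (sub_nonneg.mpr (Int.floor_le y))]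
    linarith [Int.lt_floor_add_one y]
  have hnorm_ge : (2 : ℝ) ^ emax ≤ ‖x‖ := by
    calc (2 : ℝ) ^ emax = (2 : ℝ) ^ (emax : ℝ) := (Real.rpow_intCast 2 emax).symm
    _ ≤ (2 : ℝ) ^ (Real.logb 2 ‖x‖) := by
        apply Real.rpow_le_rpow_of_exponent_le one_le_two
        rw [hemax]; exact_mod_cast Int.floor_le _
    _ = ‖x‖ := Real.rpow_logb two_pos (by norm_num) hxnorm
  have hRHS : (1 : ℝ) ≤ 2 ^ (-ℓ) * 2 ^ (1 - (q : ℤ)) * ‖x‖ := by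
    have h1 : (2 : ℝ) ^ (-ℓ) * 2 ^ (1 - (q : ℤ)) = 2 ^ (-emax) := by
      rw [← zpow_add₀ (two_ne_zero), hℓ]; ring_nf
    rw [h1]
    have h2 : (2 : ℝ) ^ (-emax) * 2 ^ emax = 1 := by
      rw [← zpow_add₀ (two_ne_zero)]; simp
    calc (1 : ℝ) = 2 ^ (-emax) * 2 ^ emax := h2.symm
    _ ≤ 2 ^ (-emax) * ‖x‖ := by
        gcongr
  refine le_trans ?_ hRHS
  rw [hz i]
  by_cases h : 0 ≤ x i
  · rw [if_pos h, abs_of_nonneg h]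
    simpa using key ((2 : ℝ) ^ (-ℓ) * x i)
  · rw [if_neg h, abs_of_neg (not_le.mp h)]
    push_cast
    have := key ((2 : ℝ) ^ (-ℓ) * (-x i))
    rw [show (-1 : ℝ) * ↑⌊(2:ℝ) ^ (-ℓ) * -x i⌋ - 2 ^ (-ℓ) * x i
        = -((⌊(2:ℝ) ^ (-ℓ) * (-x i)⌋ : ℝ) - 2 ^ (-ℓ) * (-x i)) by ring, abs_neg]
    exact this
end

section
/- For every z ∈ ℤ⁴, ‖L·z − 𝐿̃(z)‖_∞ ≤ 7/4, where L·z is computed in ℝ⁴. -/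
/-- Floor division by 2, modeling a one-bit right shift of a two's complement integer. -/
def rr (p : ℤ) : ℤ := ⌊(p : ℚ) / 2⌋

/-- The ZFP forward transform matrix `L`. -/
noncomputable def Lmat : Matrix (Fin 4) (Fin 4) ℝ :=
  (1 / 16 : ℝ) • !![4, 4, 4, 4; 5, 1, -1, -5; -4, 4, 4, -4; -2, 6, -6, 2]

/-- The lossy forward transform `𝐿̃ : ℤ⁴ → ℤ⁴` of ZFP, executed step by step. -/
def Ltilde (a : Fin 4 → ℤ) : Fin 4 → ℤ :=
  let a1 := a 0
  let a2 := a 1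
  let a3 := a 2
  let a4 := a 3
  let a1 := a1 + a4
  let a1 := rr a1
  let a4 := a4 - a1
  let a3 := a3 + a2
  let a3 := rr a3
  let a2 := a2 - a3
  let a1 := a1 + a3
  let a1 := rr a1
  let a3 := a3 - a1
  let a4 := a4 + a2
  let a4 := rr a4
  let a2 := a2 - a4
  let a4 := a4 + rr a2
  let a2 := a2 - rr a4
  ![a1, a2, a3, a4]

lemma rr_cast (p : ℤ) : ((rr p : ℤ) : ℝ) = ((p : ℝ) - ((p % 2 : ℤ) : ℝ)) / 2 := by
  have h : rr p = p / 2 := by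
    have h0 := Rat.floor_intCast_div_natCast p 2
    simpa [rr] using h0
  have h2 : 2 * (p / 2) + p % 2 = p := Int.mul_ediv_add_emod p 2
  rw [h]
  have := congrArg (fun x : ℤ => (x : ℝ)) h2
  push_cast at this
  linarith

lemma emod2_bounds (p : ℤ) : (0 : ℝ) ≤ ((p % 2 : ℤ) : ℝ) ∧ ((p % 2 : ℤ) : ℝ) ≤ 1 := by
  have h1 : 0 ≤ p % 2 := Int.emod_nonneg p (by norm_num)
  have h2 : p % 2 < 2 := Int.emod_lt_of_pos p (by norm_num)
  constructor <;> [exact_mod_cast h1; exact_mod_cast (by omega : p % 2 ≤ 1)]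

/-- Absolute error bound for the lossy forward transform:
`‖L·z − 𝐿̃(z)‖_∞ ≤ 7/4` for every `z ∈ ℤ⁴`. -/
theorem ltilde_abs_error (z : Fin 4 → ℤ) :
    ‖Lmat.mulVec (fun i => (z i : ℝ)) - (fun i => ((Ltilde z) i : ℝ))‖ ≤ 7 / 4 := by
  rw [pi_norm_le_iff_of_nonneg (by norm_num)]
  intro i
  have e1 := rr_cast (z 0 + z 3)
  have e2 := rr_cast (z 2 + z 1)
  have e3 := rr_cast (rr (z 0 + z 3) + rr (z 2 + z 1))
  have e4 := rr_cast (z 3 - rr (z 0 + z 3) + (z 1 - rr (z 2 + z 1)))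
  have e5 := rr_cast (z 1 - rr (z 2 + z 1) - rr (z 3 - rr (z 0 + z 3) + (z 1 - rr (z 2 + z 1))))
  have e6 := rr_cast (rr (z 3 - rr (z 0 + z 3) + (z 1 - rr (z 2 + z 1))) +
    rr (z 1 - rr (z 2 + z 1) - rr (z 3 - rr (z 0 + z 3) + (z 1 - rr (z 2 + z 1)))))
  have b1 := emod2_bounds (z 0 + z 3)
  have b2 := emod2_bounds (z 2 + z 1)
  have b3 := emod2_bounds (rr (z 0 + z 3) + rr (z 2 + z 1))
  have b4 := emod2_bounds (z 3 - rr (z 0 + z 3) + (z 1 - rr (z 2 + z 1)))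
  have b5 := emod2_bounds (z 1 - rr (z 2 + z 1) - rr (z 3 - rr (z 0 + z 3) + (z 1 - rr (z 2 + z 1))))
  have b6 := emod2_bounds (rr (z 3 - rr (z 0 + z 3) + (z 1 - rr (z 2 + z 1))) +
    rr (z 1 - rr (z 2 + z 1) - rr (z 3 - rr (z 0 + z 3) + (z 1 - rr (z 2 + z 1)))))
  push_cast at e1 e2 e3 e4 e5 e6
  have hLt : Ltilde z =
      ![rr (rr (z 0 + z 3) + rr (z 2 + z 1)),
        z 1 - rr (z 2 + z 1) - rr (z 3 - rr (z 0 + z 3) + (z 1 - rr (z 2 + z 1))) -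
          rr (rr (z 3 - rr (z 0 + z 3) + (z 1 - rr (z 2 + z 1))) +
            rr (z 1 - rr (z 2 + z 1) - rr (z 3 - rr (z 0 + z 3) + (z 1 - rr (z 2 + z 1))))),
        rr (z 2 + z 1) - rr (rr (z 0 + z 3) + rr (z 2 + z 1)),
        rr (z 3 - rr (z 0 + z 3) + (z 1 - rr (z 2 + z 1))) +
          rr (z 1 - rr (z 2 + z 1) - rr (z 3 - rr (z 0 + z 3) + (z 1 - rr (z 2 + z 1))))] := by
    simp only [Ltilde]
  fin_cases i <;>
    · simp [Lmat, Matrix.mulVec, dotProduct, Fin.sum_univ_four, hLt,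
        Real.norm_eq_abs]
      rw [abs_le]
      constructor <;>
        linarith [e1, e2, e3, e4, e5, e6, b1.1, b1.2, b2.1, b2.2, b3.1, b3.2, b4.1, b4.2,
          b5.1, b5.2, b6.1, b6.2]
end

section
/- Let q ∈ ℕ and z ∈ ℤ⁴ with z ≠ 0 and ‖z‖_∞ ≥ 2^{q−1}. Then ‖L·z − 𝐿̃(z)‖_∞ ≤ (7/4)·ε_q·‖z‖_∞, where ε_q = 2^{1−q}. -/
lemma rr_bounds (p : ℤ) : 2 * rr p ≤ p ∧ p ≤ 2 * rr p + 1 := by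
  unfold rr
  constructor
  · have h := Int.floor_le ((p:ℚ)/2)
    have h2 : ((2 * ⌊(p:ℚ)/2⌋ : ℤ) : ℚ) ≤ ((p:ℤ):ℚ) := by push_cast; linarith
    exact_mod_cast h2
  · have h := Int.lt_floor_add_one ((p:ℚ)/2)
    have h2 : ((p:ℤ):ℚ) < ((2 * ⌊(p:ℚ)/2⌋ + 2 : ℤ) : ℚ) := by push_cast; linarith
    have := (Int.cast_lt (R := ℚ)).mp h2
    omega


/-- Relative error bound for the lossy forward transform: if `z ∈ ℤ⁴`, `z ≠ 0`, and
`‖z‖_∞ ≥ 2^{q−1}`, then `‖L·z − 𝐿̃(z)‖_∞ ≤ (7/4)·ε_q·‖z‖_∞` with `ε_q = 2^{1−q}`. -/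
theorem ltilde_rel_error (q : ℕ) (z : Fin 4 → ℤ) (hz : z ≠ 0)
    (hnorm : (2 : ℝ) ^ ((q : ℤ) - 1) ≤ ‖(fun i => (z i : ℝ))‖) :
    ‖Lmat.mulVec (fun i => (z i : ℝ)) - (fun i => ((Ltilde z) i : ℝ))‖ ≤
      (7 / 4) * 2 ^ (1 - (q : ℤ)) * ‖(fun i => (z i : ℝ))‖ := by
  have hstep : (7/4 : ℝ) ≤ 7 / 4 * 2 ^ (1 - (q:ℤ)) * ‖(fun i => (z i : ℝ))‖ := by
    have hpow : (2:ℝ) ^ (1 - (q:ℤ)) * 2 ^ ((q:ℤ) - 1) = 1 := by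
      rw [← zpow_add₀ (by norm_num : (2:ℝ) ≠ 0)]; norm_num
    have hp : (0:ℝ) < 2 ^ (1 - (q:ℤ)) := by positivity
    nlinarith [hnorm, hp]
  refine le_trans ?_ hstep
  have key : Ltilde z = ![rr (rr (z 0 + z 3) + rr (z 2 + z 1)),
      z 1 - rr (z 2 + z 1) - rr (z 3 - rr (z 0 + z 3) + (z 1 - rr (z 2 + z 1)))
        - rr (rr (z 3 - rr (z 0 + z 3) + (z 1 - rr (z 2 + z 1)))
            + rr (z 1 - rr (z 2 + z 1) - rr (z 3 - rr (z 0 + z 3) + (z 1 - rr (z 2 + z 1))))),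
      rr (z 2 + z 1) - rr (rr (z 0 + z 3) + rr (z 2 + z 1)),
      rr (z 3 - rr (z 0 + z 3) + (z 1 - rr (z 2 + z 1)))
        + rr (z 1 - rr (z 2 + z 1) - rr (z 3 - rr (z 0 + z 3) + (z 1 - rr (z 2 + z 1))))] := rfl
  obtain ⟨h1, h1'⟩ := rr_bounds (z 0 + z 3)
  obtain ⟨h3, h3'⟩ := rr_bounds (z 2 + z 1)
  obtain ⟨h5, h5'⟩ := rr_bounds (rr (z 0 + z 3) + rr (z 2 + z 1))
  obtain ⟨h6, h6'⟩ := rr_bounds (z 3 - rr (z 0 + z 3) + (z 1 - rr (z 2 + z 1)))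
  obtain ⟨h7, h7'⟩ := rr_bounds (z 1 - rr (z 2 + z 1) - rr (z 3 - rr (z 0 + z 3) + (z 1 - rr (z 2 + z 1))))
  obtain ⟨h8, h8'⟩ := rr_bounds (rr (z 3 - rr (z 0 + z 3) + (z 1 - rr (z 2 + z 1)))
        + rr (z 1 - rr (z 2 + z 1) - rr (z 3 - rr (z 0 + z 3) + (z 1 - rr (z 2 + z 1)))))
  set b1 := rr (z 0 + z 3) with hb1
  set b3 := rr (z 2 + z 1) with hb3
  set b5 := rr (b1 + b3) with hb5
  set b6 := rr (z 3 - b1 + (z 1 - b3)) with hb6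
  set b7 := rr (z 1 - b3 - b6) with hb7
  set b8 := rr (b6 + b7) with hb8
  have r1 := (Int.cast_le (R := ℝ)).mpr h1
  have r1' := (Int.cast_le (R := ℝ)).mpr h1'
  have r3 := (Int.cast_le (R := ℝ)).mpr h3
  have r3' := (Int.cast_le (R := ℝ)).mpr h3'
  have r5 := (Int.cast_le (R := ℝ)).mpr h5
  have r5' := (Int.cast_le (R := ℝ)).mpr h5'
  have r6 := (Int.cast_le (R := ℝ)).mpr h6
  have r6' := (Int.cast_le (R := ℝ)).mpr h6'
  have r7 := (Int.cast_le (R := ℝ)).mpr h7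
  have r7' := (Int.cast_le (R := ℝ)).mpr h7'
  have r8 := (Int.cast_le (R := ℝ)).mpr h8
  have r8' := (Int.cast_le (R := ℝ)).mpr h8'
  push_cast at r1 r1' r3 r3' r5 r5' r6 r6' r7 r7' r8 r8'
  rw [pi_norm_le_iff_of_nonneg (by norm_num : (0:ℝ) ≤ 7/4)]
  intro i
  fin_cases i <;>
    · simp only [key, Pi.sub_apply, Real.norm_eq_abs]
      norm_num [Lmat, Matrix.mulVec, dotProduct, Fin.sum_univ_four,
        Matrix.cons_val_zero, Matrix.cons_val_one, Matrix.head_cons,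
        Matrix.cons_val_succ, Matrix.smul_apply, smul_eq_mul]
      rw [abs_le]
      constructor <;> push_cast <;> linarith
end

section
/- Let d ≥ 1, q ∈ ℕ, and z ∈ ℤ^{4^d} with z ≠ 0 and ‖z‖_∞ ≥ 2^{q−1}. Then ‖L_d·z − 𝐿̃_d(z)‖_∞ ≤ (7/4)·(2^d − 1)·ε_q·‖z‖_∞, where ε_q = 2^{1−q}. -/
/-- The `d`-fold Kronecker power `L_d = L ⊗ ⋯ ⊗ L`, indexed by tuples in `{0,1,2,3}^d`:
`(L_d)_{v,w} = ∏_j L_{v_j, w_j}`. -/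
noncomputable def LmatD (d : ℕ) : Matrix (Fin d → Fin 4) (Fin d → Fin 4) ℝ :=
  fun v w => ∏ j, Lmat (v j) (w j)

/-- Applying `𝐿̃` along dimension `j`: for each fixed choice of the other coordinates,
the 4-vector of entries indexed by the `j`-th coordinate is replaced by its `𝐿̃`-image. -/
def applyAlong {d : ℕ} (j : Fin d) (z : (Fin d → Fin 4) → ℤ) : (Fin d → Fin 4) → ℤ :=
  fun v => Ltilde (fun t => z (Function.update v j t)) (v j)

/-- The lossy `d`-dimensional forward transform `𝐿̃_d`: apply `𝐿̃` along dimension 1,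
then dimension 2, …, then dimension `d`. -/
def LtildeD {d : ℕ} (z : (Fin d → Fin 4) → ℤ) : (Fin d → Fin 4) → ℤ :=
  (List.finRange d).foldl (fun acc j => applyAlong j acc) z

/-!
Since `r` is floor division by two, each lossy 1-D step differs from `L` by at most `7/4` in
every coordinate (the roundings are tracked exactly after scaling by the row denominators of
`L`). Every row of `L` has absolute sum at most one, so `L` does not increase the sup norm, and
`L_d` is `L` applied along each dimension in turn; hence the errors of the `d` passes simply
add up, giving `7/4 · d ≤ 7/4 · (2^d - 1)`, and `ε_q ‖z‖_∞ ≥ 1` by assumption.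
-/

open Matrix

lemma rr_eq_ediv (p : ℤ) : rr p = p / 2 := by
  simpa [rr] using Rat.floor_intCast_div_natCast p 2

lemma Lmat_mulVec (w : Fin 4 → ℝ) : Lmat *ᵥ w = ![
    (w 0 + w 1 + w 2 + w 3) / 4,
    (5 * w 0 + w 1 - w 2 - 5 * w 3) / 16,
    (-w 0 + w 1 + w 2 - w 3) / 4,
    (-w 0 + 3 * w 1 - 3 * w 2 + w 3) / 8] := by
  ext i
  fin_cases i <;>
    · simp only [Lmat, mulVec, dotProduct, Fin.sum_univ_four, Matrix.smul_apply, of_apply, cons_val,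
        Fin.zero_eta, Fin.mk_one, Fin.reduceFinMk, Fin.isValue, smul_eq_mul]
      ring

lemma Ltilde_sub_bounds (a : Fin 4 → ℤ) :
    |a 0 + a 1 + a 2 + a 3 - 4 * Ltilde a 0| ≤ 7 ∧
    |5 * a 0 + a 1 - a 2 - 5 * a 3 - 16 * Ltilde a 1| ≤ 28 ∧
    |-a 0 + a 1 + a 2 - a 3 - 4 * Ltilde a 2| ≤ 7 ∧
    |-a 0 + 3 * a 1 - 3 * a 2 + a 3 - 8 * Ltilde a 3| ≤ 14 := by
  simp only [Ltilde, rr_eq_ediv, cons_val, abs_le]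
  omega

lemma norm_Lmat_mulVec_sub_Ltilde_le (a : Fin 4 → ℤ) :
    ‖Lmat *ᵥ (fun t => (a t : ℝ)) - fun t => (Ltilde a t : ℝ)‖ ≤ 7 / 4 := by
  obtain ⟨h0, h1, h2, h3⟩ := Ltilde_sub_bounds a
  simp only [abs_le] at h0 h1 h2 h3
  rify at h0 h1 h2 h3
  refine (pi_norm_le_iff_of_nonneg (by norm_num)).2 fun i => ?_
  rw [Real.norm_eq_abs, abs_le, Pi.sub_apply, Lmat_mulVec]
  fin_cases i <;> simp only [Fin.zero_eta, Fin.mk_one, Fin.reduceFinMk, Fin.isValue, cons_val] <;>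
    constructor <;> linarith

lemma norm_Lmat_mulVec_le (w : Fin 4 → ℝ) : ‖Lmat *ᵥ w‖ ≤ ‖w‖ := by
  have hw (t : Fin 4) : |w t| ≤ ‖w‖ := by simpa using norm_le_pi_norm w t
  have h0 := abs_le.mp (hw 0); have h1 := abs_le.mp (hw 1)
  have h2 := abs_le.mp (hw 2); have h3 := abs_le.mp (hw 3)
  refine (pi_norm_le_iff_of_nonneg (norm_nonneg w)).2 fun i => ?_
  rw [Real.norm_eq_abs, abs_le, Lmat_mulVec]
  fin_cases i <;> simp only [Fin.zero_eta, Fin.mk_one, Fin.reduceFinMk, Fin.isValue, cons_val] <;>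
    constructor <;> linarith

section Along

variable {ι n R : Type*} [CommSemiring R]

def mulVecAlong [DecidableEq ι] [Fintype n] (A : Matrix n n R) (j : ι) (w : (ι → n) → R) :
    (ι → n) → R :=
  fun v => (A *ᵥ fun t => w (Function.update v j t)) (v j)

def piKron [Fintype ι] (f : ι → Matrix n n R) : Matrix (ι → n) (ι → n) R :=
  fun v u => ∏ i, f i (v i) (u i)

lemma piKron_one [Fintype ι] [DecidableEq n] :
    piKron (fun _ : ι => (1 : Matrix n n R)) = 1 := by
  ext v u
  simp only [piKron, one_apply, Fintype.prod_boole, funext_iff]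

lemma prod_apply_update_eq_mul_prod_erase [Fintype ι] [DecidableEq ι] (f : ι → Matrix n n R)
    (j : ι) (v u : ι → n) (t : n) :
    ∏ i, f i (Function.update v j t i) (u i) =
      f j t (u j) * ∏ i ∈ Finset.univ.erase j, f i (v i) (u i) := by
  rw [← Finset.mul_prod_erase Finset.univ _ (Finset.mem_univ j), Function.update_self]
  congr 1
  exact Finset.prod_congr rfl fun i hi => by
    rw [Function.update_of_ne (Finset.ne_of_mem_erase hi)]

lemma mulVecAlong_piKron_mulVec [Fintype ι] [DecidableEq ι] [Fintype n] (A : Matrix n n R)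
    (f : ι → Matrix n n R) (j : ι) (w : (ι → n) → R) :
    mulVecAlong A j (piKron f *ᵥ w) = piKron (Function.update f j (A * f j)) *ᵥ w := by
  ext v
  have hupd : ∀ u : ι → n, ∏ i, Function.update f j (A * f j) i (v i) (u i) =
      ∑ t, A (v j) t * (f j t (u j) * ∏ i ∈ Finset.univ.erase j, f i (v i) (u i)) := by
    intro u
    rw [← Finset.mul_prod_erase Finset.univ _ (Finset.mem_univ j), Function.update_self,
      mul_apply, Finset.sum_mul]
    refine Finset.sum_congr rfl fun t _ => ?_
    rw [mul_assoc]
    congr 2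
    exact Finset.prod_congr rfl fun i hi => by
      rw [Function.update_of_ne (Finset.ne_of_mem_erase hi)]
  simp only [mulVecAlong, mulVec, dotProduct, piKron, prod_apply_update_eq_mul_prod_erase, hupd,
    Finset.mul_sum, Finset.sum_mul]
  rw [Finset.sum_comm]
  exact Finset.sum_congr rfl fun u _ => Finset.sum_congr rfl fun t _ => by ring

lemma foldl_mulVecAlong_piKron_mulVec [Fintype ι] [DecidableEq ι] [Fintype n] (A : Matrix n n R)
    (l : List ι) (hl : l.Nodup) (f : ι → Matrix n n R) (w : (ι → n) → R) :
    l.foldl (fun acc j => mulVecAlong A j acc) (piKron f *ᵥ w) =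
      piKron (fun i => if i ∈ l then A * f i else f i) *ᵥ w := by
  induction l generalizing f with
  | nil => simp
  | cons j l ih =>
    obtain ⟨hjl, hl⟩ := List.nodup_cons.mp hl
    rw [List.foldl_cons, mulVecAlong_piKron_mulVec, ih hl]
    congr 2
    ext1 i
    by_cases hij : i = j
    · subst hij; simp [hjl]
    · simp [hij]

end Along

lemma mulVecAlong_sub {ι n R : Type*} [DecidableEq ι] [Fintype n] [CommRing R]
    (A : Matrix n n R) (j : ι) (w w' : (ι → n) → R) :
    mulVecAlong A j (w - w') = mulVecAlong A j w - mulVecAlong A j w' := by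
  ext v
  simp only [mulVecAlong, Pi.sub_apply]
  rw [← Pi.sub_apply, ← mulVec_sub]
  rfl

lemma LmatD_eq_piKron (d : ℕ) : LmatD d = piKron fun _ => Lmat := rfl

lemma LmatD_mulVec (d : ℕ) (w : (Fin d → Fin 4) → ℝ) :
    LmatD d *ᵥ w = (List.finRange d).foldl (fun acc j => mulVecAlong Lmat j acc) w := by
  conv_rhs => rw [← one_mulVec w, ← piKron_one,
    foldl_mulVecAlong_piKron_mulVec _ _ (List.nodup_finRange d)]
  simp [LmatD_eq_piKron]

section LossyTransform

variable {d : ℕ}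

lemma norm_mulVecAlong_Lmat_le (j : Fin d) (w : (Fin d → Fin 4) → ℝ) :
    ‖mulVecAlong Lmat j w‖ ≤ ‖w‖ := by
  refine (pi_norm_le_iff_of_nonneg (norm_nonneg w)).2 fun v => ?_
  calc ‖mulVecAlong Lmat j w v‖ ≤ ‖Lmat *ᵥ fun t => w (Function.update v j t)‖ :=
        norm_le_pi_norm (Lmat *ᵥ fun t => w (Function.update v j t)) (v j)
    _ ≤ ‖fun t => w (Function.update v j t)‖ := norm_Lmat_mulVec_le _
    _ ≤ ‖w‖ := (pi_norm_le_iff_of_nonneg (norm_nonneg w)).2 fun t => norm_le_pi_norm w _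

lemma norm_foldl_mulVecAlong_Lmat_sub_le (l : List (Fin d)) (w w' : (Fin d → Fin 4) → ℝ) :
    ‖l.foldl (fun acc j => mulVecAlong Lmat j acc) w -
      l.foldl (fun acc j => mulVecAlong Lmat j acc) w'‖ ≤ ‖w - w'‖ := by
  induction l generalizing w w' with
  | nil => exact le_rfl
  | cons j l ih =>
    calc _ ≤ ‖mulVecAlong Lmat j w - mulVecAlong Lmat j w'‖ := ih _ _
      _ ≤ ‖w - w'‖ := by rw [← mulVecAlong_sub]; exact norm_mulVecAlong_Lmat_le j _

lemma norm_mulVecAlong_Lmat_sub_applyAlong_le (j : Fin d) (z : (Fin d → Fin 4) → ℤ) :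
    ‖mulVecAlong Lmat j (fun v => (z v : ℝ)) - fun v => (applyAlong j z v : ℝ)‖ ≤ 7 / 4 :=
  (pi_norm_le_iff_of_nonneg (by norm_num)).2 fun v =>
    (norm_le_pi_norm _ (v j)).trans (norm_Lmat_mulVec_sub_Ltilde_le _)

lemma norm_foldl_mulVecAlong_Lmat_sub_foldl_applyAlong_le (l : List (Fin d))
    (z : (Fin d → Fin 4) → ℤ) :
    ‖l.foldl (fun acc j => mulVecAlong Lmat j acc) (fun v => (z v : ℝ)) -
      fun v => (l.foldl (fun acc j => applyAlong j acc) z v : ℝ)‖ ≤ 7 / 4 * l.length := by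
  induction l generalizing z with
  | nil => simp
  | cons j l ih =>
    simp only [List.foldl_cons, List.length_cons]
    calc _ ≤ ‖mulVecAlong Lmat j (fun v => (z v : ℝ)) - fun v => (applyAlong j z v : ℝ)‖ +
          7 / 4 * l.length :=
          norm_sub_le_norm_sub_add_norm_sub _ _ _ |>.trans
            (add_le_add (norm_foldl_mulVecAlong_Lmat_sub_le l _ _) (ih _))
      _ ≤ 7 / 4 + 7 / 4 * l.length :=
          add_le_add_left (norm_mulVecAlong_Lmat_sub_applyAlong_le j z) _
      _ = 7 / 4 * ((l.length + 1 : ℕ) : ℝ) := by push_cast; ring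

end LossyTransform

lemma one_le_two_zpow_mul {q : ℤ} {M : ℝ} (h : (2 : ℝ) ^ (q - 1) ≤ M) :
    1 ≤ (2 : ℝ) ^ (1 - q) * M := by
  calc (1 : ℝ) = 2 ^ (1 - q) * 2 ^ (q - 1) := by
        rw [← zpow_add₀ two_ne_zero]; norm_num
    _ ≤ 2 ^ (1 - q) * M := by gcongr

theorem ltildeD_error_general (d q : ℕ) (z : (Fin d → Fin 4) → ℤ)
    (hnorm : (2 : ℝ) ^ ((q : ℤ) - 1) ≤ ‖(fun v => (z v : ℝ))‖) :
    ‖(LmatD d).mulVec (fun v => (z v : ℝ)) - (fun v => ((LtildeD z) v : ℝ))‖ ≤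
      (7 / 4) * ((2 : ℝ) ^ d - 1) * 2 ^ (1 - (q : ℤ)) * ‖(fun v => (z v : ℝ))‖ := by
  have hd : (d : ℝ) ≤ 2 ^ d - 1 := by
    have : (d : ℝ) + 1 ≤ 2 ^ d := by exact_mod_cast Nat.lt_two_pow_self
    linarith
  have hε := one_le_two_zpow_mul hnorm
  calc _ ≤ 7 / 4 * (d : ℝ) := by
        simpa [LmatD_mulVec, LtildeD] using
          norm_foldl_mulVecAlong_Lmat_sub_foldl_applyAlong_le (List.finRange d) z
    _ ≤ 7 / 4 * (2 ^ d - 1) := by gcongr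
    _ ≤ 7 / 4 * (2 ^ d - 1) * (2 ^ (1 - (q : ℤ)) * ‖(fun v => (z v : ℝ))‖) :=
        le_mul_of_one_le_right (by linarith) hε
    _ = _ := by ring

/-- Error bound for the lossy `d`-dimensional forward transform: if `z ∈ ℤ^{4^d}`,
`z ≠ 0`, and `‖z‖_∞ ≥ 2^{q−1}`, then
`‖L_d·z − 𝐿̃_d(z)‖_∞ ≤ (7/4)·(2^d − 1)·ε_q·‖z‖_∞` with `ε_q = 2^{1−q}`. -/
theorem ltildeD_error (d q : ℕ) (hd : 1 ≤ d) (z : (Fin d → Fin 4) → ℤ) (hz : z ≠ 0)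
    (hnorm : (2 : ℝ) ^ ((q : ℤ) - 1) ≤ ‖(fun v => (z v : ℝ))‖) :
    ‖(LmatD d).mulVec (fun v => (z v : ℝ)) - (fun v => ((LtildeD z) v : ℝ))‖ ≤
      (7 / 4) * ((2 : ℝ) ^ d - 1) * 2 ^ (1 - (q : ℤ)) * ‖(fun v => (z v : ℝ))‖ :=
  ltildeD_error_general d q z hnorm
end

section
/- Let n, q ∈ ℕ, β ∈ ℕ, and a ∈ ℤⁿ with ‖a‖_∞ ≥ 2^{q−1}. For each i, let d_i : ℕ → {0,1} be the (unique) finitely supported negabinary digit function with a_i = ∑_j d_i(j)·(−2)^j, and define the truncated value â_i = ∑_{j > q+1−β} d_i(j)·(−2)^j. Then max_i |â_i − a_i| ≤ (8/3)·ε_β·‖a‖_∞, where ε_β = 2^{1−β}. -/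
def Esum (M : ℕ) : ℤ := ∑ j ∈ Finset.range (M+1), if Even j then 2^j else 0
def Osum (M : ℕ) : ℤ := ∑ j ∈ Finset.range (M+1), if Even j then 0 else 2^j

lemma EO (M : ℕ) : 3 * Esum M + 1 = (if Even M then 4*2^M else 2*2^M) ∧
    3 * Osum M + 2 = (if Even M then 2*2^M else 4*2^M) := by
  induction M with
  | zero => simp [Esum, Osum]
  | succ M ih =>
    obtain ⟨h1, h2⟩ := ih
    rcases Nat.even_or_odd M with hM | hM
    · have hM1 : ¬ Even (M+1) := by simp [Nat.even_add_one, hM]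
      simp only [Esum, Osum, Finset.sum_range_succ, if_neg hM1, if_pos hM, pow_succ] at *
      constructor <;> linarith
    · have hM1 : Even (M+1) := by simpa [Nat.even_add_one] using (Nat.not_even_iff_odd.mpr hM)
      have hM' : ¬ Even M := (Nat.not_even_iff_odd.mpr hM)
      simp only [Esum, Osum, Finset.sum_range_succ, if_pos hM1, if_neg hM', pow_succ] at *
      constructor <;> linarith

lemma key (M : ℕ) (F : Finset ℕ) (hF : ∀ j ∈ F, j ≤ M) (d : ℕ → ℤ)
    (hd : ∀ j, d j = 0 ∨ d j = 1) :
    3 * |∑ j ∈ F, d j * (-2)^j| ≤ 4 * 2^M := by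
  have hsub : F ⊆ Finset.range (M+1) := fun j hj =>
    Finset.mem_range.mpr (Nat.lt_succ_of_le (hF j hj))
  have hub : ∑ j ∈ F, d j * (-2)^j ≤ Esum M := by
    calc ∑ j ∈ F, d j * (-2)^j ≤ ∑ j ∈ F, (if Even j then 2^j else 0 : ℤ) := by
          apply Finset.sum_le_sum
          intro j hj
          rcases hd j with h | h <;> rcases Nat.even_or_odd j with he | ho
          · simp only [h, zero_mul, if_pos he]; positivity
          · simp [h, (Nat.not_even_iff_odd.mpr ho)]
          · simp [h, if_pos he, he.neg_pow]
          · simp only [h, one_mul, if_neg (Nat.not_even_iff_odd.mpr ho), ho.neg_pow]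
            have : (0:ℤ) < 2^j := by positivity
            linarith
      _ ≤ Esum M := by
          apply Finset.sum_le_sum_of_subset_of_nonneg hsub
          intro j _ _; positivity
  have hlb : -Osum M ≤ ∑ j ∈ F, d j * (-2)^j := by
    have : -∑ j ∈ F, d j * (-2)^j ≤ Osum M := by
      rw [← Finset.sum_neg_distrib]
      calc ∑ j ∈ F, -(d j * (-2)^j) ≤ ∑ j ∈ F, (if Even j then 0 else 2^j : ℤ) := by
            apply Finset.sum_le_sum
            intro j hj
            rcases hd j with h | h <;> rcases Nat.even_or_odd j with he | ho
            · simp only [h, zero_mul, neg_zero]; positivity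
            · simp only [h, zero_mul, neg_zero, if_neg (Nat.not_even_iff_odd.mpr ho)]; positivity
            · simp only [h, one_mul, if_pos he, he.neg_pow]
              have : (0:ℤ) < 2^j := by positivity
              linarith
            · simp [h, if_neg (Nat.not_even_iff_odd.mpr ho), ho.neg_pow]
        _ ≤ Osum M := by
            apply Finset.sum_le_sum_of_subset_of_nonneg hsub
            intro j _ _; positivity
    linarith
  obtain ⟨h1, h2⟩ := EO M
  rcases abs_cases (∑ j ∈ F, d j * (-2)^j) with ⟨he, _⟩ | ⟨he, _⟩ <;> rw [he] <;>
    split_ifs at h1 h2 <;> linarith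

/-- Step 8 of ZFP fixed-precision compression: if `a ∈ ℤⁿ` with `‖a‖_∞ ≥ 2^{q−1}`,
`d_i` is the (unique) negabinary digit function of `a_i`, and
`â_i = ∑_{j > q+1−β} d_i(j)·(−2)^j` keeps only the `β` most significant negabinary
bit planes, then `max_i |â_i − a_i| ≤ (8/3)·ε_β·‖a‖_∞`, where `ε_β = 2^{1−β}`. -/
theorem zfp_step8_error (n q β : ℕ) (a : Fin n → ℤ)
    (hnorm : (2 : ℝ) ^ ((q : ℤ) - 1) ≤ ‖(fun i => (a i : ℝ))‖)
    (D : Fin n → (ℕ →₀ ℤ))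
    (hD01 : ∀ i j, D i j = 0 ∨ D i j = 1)
    (hDrep : ∀ i, a i = ∑ j ∈ (D i).support, D i j * (-2 : ℤ) ^ j)
    (ahat : Fin n → ℤ)
    (hahat : ∀ i, ahat i =
      ∑ j ∈ (D i).support.filter (fun j : ℕ => (q : ℤ) + 1 - (β : ℤ) < (j : ℤ)),
        D i j * (-2 : ℤ) ^ j) :
    ∀ i, |(ahat i : ℝ) - (a i : ℝ)| ≤ (8 / 3) * 2 ^ (1 - (β : ℤ)) * ‖(fun i => (a i : ℝ))‖ := by
  intro i
  have hnormpos : (0:ℝ) < ‖(fun i => (a i : ℝ))‖ :=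
    lt_of_lt_of_le (by positivity) hnorm
  set F : Finset ℕ :=
    (D i).support.filter (fun j : ℕ => ¬ ((q : ℤ) + 1 - (β : ℤ) < (j : ℤ))) with hF
  have hsplit : a i - ahat i = ∑ j ∈ F, D i j * (-2 : ℤ) ^ j := by
    have := Finset.sum_filter_add_sum_filter_not (D i).support
      (fun j : ℕ => (q : ℤ) + 1 - (β : ℤ) < (j : ℤ)) (fun j => D i j * (-2 : ℤ) ^ j)
    rw [hDrep i, hahat i, hF]
    linarith
  by_cases hβ : β ≤ q + 1
  · set M : ℕ := q + 1 - β with hM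
    have hMz : (M : ℤ) = (q : ℤ) + 1 - (β : ℤ) := by
      push_cast [hM]; omega
    have hFle : ∀ j ∈ F, j ≤ M := by
      intro j hj
      rw [hF, Finset.mem_filter] at hj
      have := hj.2
      omega
    have hkey := key M F hFle (fun j => D i j) (fun j => hD01 i j)
    rw [← hsplit] at hkey
    have hcast : |(ahat i : ℝ) - (a i : ℝ)| ≤ (4 / 3) * 2 ^ M := by
      have : (3:ℝ) * |(a i : ℝ) - (ahat i : ℝ)| ≤ 4 * 2 ^ M := by
        have h' : ((3 * |a i - ahat i| : ℤ) : ℝ) ≤ ((4 * 2 ^ M : ℤ) : ℝ) := by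
          exact_mod_cast hkey
        push_cast [Int.cast_abs] at h'
        convert h' using 3

      rw [abs_sub_comm]
      linarith
    refine hcast.trans ?_
    have h2 : (4 / 3 : ℝ) * 2 ^ M = (8 / 3) * 2 ^ (1 - (β:ℤ)) * 2 ^ ((q:ℤ) - 1) := by
      rw [← zpow_natCast (2:ℝ) M, hMz]
      rw [mul_assoc, ← zpow_add₀ (two_ne_zero : (2:ℝ) ≠ 0)]
      have : (q:ℤ) + 1 - (β:ℤ) = (1 - (β:ℤ)) + ((q:ℤ) - 1) + 1 := by ring
      rw [this, zpow_add₀ (two_ne_zero : (2:ℝ) ≠ 0), zpow_one]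
      ring
    rw [h2]
    gcongr
  · have hFe : F = ∅ := by
      rw [hF, Finset.filter_eq_empty_iff]
      intro j _
      push_neg
      omega
    rw [hFe, Finset.sum_empty] at hsplit
    have : (ahat i : ℝ) = (a i : ℝ) := by exact_mod_cast congrArg Int.cast (by omega : ahat i = a i)
    rw [this, sub_self, abs_zero]
    positivity
end

section
/- Let d ≥ 1 and k, q, b ∈ ℕ, e_max ∈ ℤ, and set ε_m = 2^{1−m}, k_L = (7/4)·(2^d − 1), and c = ε_q·(k_L·(1+ε_q) + 1). Suppose D := ((4/15)^d·2^{−b−e_max} − ε_k)/(1+ε_k) − c > 0, and let β ∈ ℕ satisfy β ≥ log₂( (16/3)·(1+c) / D ). Then K_β ≤ 2^{−b−e_max}, where K_β = (15/4)^d·( (1+ε_k)·( (8/3)·ε_β + ε_q·(1 + (8/3)·ε_β)·(k_L·(1+ε_q) + 1) ) + ε_k ). -/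
/-- Fixed-accuracy mode guarantee (arithmetic content): with `ε_m = 2^{1−m}`,
`k_L = (7/4)·(2^d−1)`, `c = ε_q·(k_L·(1+ε_q)+1)`, and
`D = ((4/15)^d·2^{−b−e_max} − ε_k)/(1+ε_k) − c > 0`, any `β ∈ ℕ` with
`β ≥ log₂((16/3)·(1+c)/D)` makes the round-trip constant
`K_β = (15/4)^d·((1+ε_k)·((8/3)·ε_β + ε_q·(1+(8/3)·ε_β)·(k_L·(1+ε_q)+1)) + ε_k)`
satisfy `K_β ≤ 2^{−b−e_max}`. -/
theorem zfp_fixed_accuracy (d k q b : ℕ) (hd : 1 ≤ d) (emax : ℤ) (c D : ℝ)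
    (hc : c = 2 ^ (1 - (q : ℤ)) *
      ((7 / 4) * ((2 : ℝ) ^ d - 1) * (1 + 2 ^ (1 - (q : ℤ))) + 1))
    (hD : D = ((4 / 15 : ℝ) ^ d * (2 : ℝ) ^ (-(b : ℤ) - emax) - 2 ^ (1 - (k : ℤ))) /
      (1 + 2 ^ (1 - (k : ℤ))) - c)
    (hDpos : 0 < D)
    (β : ℕ) (hβ : Real.logb 2 ((16 / 3) * (1 + c) / D) ≤ (β : ℝ)) :
    (15 / 4 : ℝ) ^ d * ((1 + 2 ^ (1 - (k : ℤ))) * ((8 / 3) * 2 ^ (1 - (β : ℤ)) +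
        2 ^ (1 - (q : ℤ)) * (1 + (8 / 3) * 2 ^ (1 - (β : ℤ))) *
          ((7 / 4) * ((2 : ℝ) ^ d - 1) * (1 + 2 ^ (1 - (q : ℤ))) + 1)) +
        2 ^ (1 - (k : ℤ))) ≤ (2 : ℝ) ^ (-(b : ℤ) - emax) := by
  set εk : ℝ := 2 ^ (1 - (k : ℤ)) with hεkdef
  set εβ : ℝ := 2 ^ (1 - (β : ℤ)) with hεβdef
  set E : ℝ := (2 : ℝ) ^ (-(b : ℤ) - emax) with hEdef
  set P : ℝ := (15 / 4 : ℝ) ^ d with hPdef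
  set Q : ℝ := (4 / 15 : ℝ) ^ d with hQdef
  have hεk : (0:ℝ) < εk := by positivity
  have hεβ : (0:ℝ) < εβ := by positivity
  have hεq : (0:ℝ) < (2:ℝ) ^ (1 - (q : ℤ)) := by positivity
  have h2d : (1:ℝ) ≤ 2 ^ d := one_le_pow₀ (by norm_num)
  have hM : (0:ℝ) < 7 / 4 * ((2:ℝ) ^ d - 1) * (1 + 2 ^ (1 - (q : ℤ))) + 1 := by
    nlinarith [mul_nonneg (by linarith : (0:ℝ) ≤ 7 / 4 * ((2:ℝ) ^ d - 1))
      (by linarith : (0:ℝ) ≤ 1 + 2 ^ (1 - (q : ℤ)))]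
  have hc0 : 0 < c := by rw [hc]; exact mul_pos hεq hM
  have hP : (0:ℝ) < P := by positivity
  have hPQ : P * Q = 1 := by rw [hPdef, hQdef, ← mul_pow]; norm_num
  have hX : (0:ℝ) < (16/3) * (1 + c) / D := by positivity
  have hkey : (16/3) * (1 + c) / D ≤ 2 ^ β := by
    have h := (Real.logb_le_iff_le_rpow (by norm_num) hX).mp hβ
    rwa [Real.rpow_natCast] at h
  have hβpow : (0:ℝ) < (2:ℝ) ^ β := by positivity
  have hmul : εβ * 2 ^ β = 2 := by
    rw [hεβdef, ← zpow_natCast (2:ℝ) β, ← zpow_add₀ (by norm_num : (2:ℝ) ≠ 0)]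
    norm_num
  have h1 : (16/3) * (1 + c) ≤ D * 2 ^ β := by
    rw [div_le_iff₀ hDpos] at hkey; linarith [hkey]
  have hstep : (8/3) * εβ * (1 + c) ≤ D := by
    have h2 : (8/3) * εβ * (1 + c) * 2 ^ β ≤ D * 2 ^ β := by nlinarith [hmul, h1]
    exact le_of_mul_le_mul_right h2 hβpow
  -- rewrite goal
  have hgoal : P * ((1 + εk) * ((8/3) * εβ +
      2 ^ (1 - (q : ℤ)) * (1 + (8/3) * εβ) *
        ((7 / 4) * ((2 : ℝ) ^ d - 1) * (1 + 2 ^ (1 - (q : ℤ))) + 1)) + εk)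
      = P * ((1 + εk) * (c + (8/3) * εβ * (1 + c)) + εk) := by
    rw [hc]; ring
  rw [hgoal]
  have hT : c + (8/3) * εβ * (1 + c) ≤ (Q * E - εk) / (1 + εk) := by
    rw [hD] at hstep; linarith [hstep]
  have h3 : (1 + εk) * (c + (8/3) * εβ * (1 + c)) ≤ Q * E - εk := by
    have h4 := mul_le_mul_of_nonneg_left hT (by linarith : (0:ℝ) ≤ 1 + εk)
    rwa [mul_div_cancel₀ _ (by linarith : (1:ℝ) + εk ≠ 0)] at h4
  have h5 : P * ((1 + εk) * (c + (8/3) * εβ * (1 + c)) + εk) ≤ P * (Q * E) :=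
    mul_le_mul_of_nonneg_left (by linarith) hP.le
  calc P * ((1 + εk) * (c + (8/3) * εβ * (1 + c)) + εk) ≤ P * (Q * E) := h5
    _ = E := by rw [← mul_assoc, hPQ, one_mul]
end
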